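/- If a finite rule set R is pieceful and bounded, then for every instance I, the size of every piece of chase_∞(I,R) (with respect to nulls) is bounded by a constant depending only on R, not on I. -/

import Mathlib

open scoped Classical
noncomputable section

namespace ER

/-- Terms: constants or variables (variables occurring in instances are called nulls). -/
inductive Term where
  | const : ℕ → Term
  | var : ℕ → Term
deriving DecidableEq

def Term.isConst : Term → Prop
  | .const _ => True
  | .var _ => False

/-- An atom `p(t₁,…,tₙ)`. -/
structure Atom where
  pred : ℕ
  args : List Term
deriving DecidableEq

def Atom.terms (a : Atom) : Set Term := {t | t ∈ a.args}
def Atom.vars (a : Atom) : Set ℕ := {v | Term.var v ∈ a.args}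

def termsOf (S : Set Atom) : Set Term := ⋃ a ∈ S, a.terms
def varsOf (S : Set Atom) : Set ℕ := ⋃ a ∈ S, a.vars
/-- The nulls (non-constant terms) occurring in a set of atoms. -/
def nullsOf (S : Set Atom) : Set Term := {t | t ∈ termsOf S ∧ ¬ t.isConst}

def Term.subst (σ : ℕ → Term) : Term → Term
  | .const c => .const c
  | .var v => σ v

def Atom.subst (σ : ℕ → Term) (a : Atom) : Atom := ⟨a.pred, a.args.map (Term.subst σ)⟩
def substSet (σ : ℕ → Term) (S : Set Atom) : Set Atom := (Atom.subst σ) '' S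

/-- A homomorphism from `S1` to `S2`: a substitution of variables by terms mapping `S1` into `S2`. -/
def isHom (σ : ℕ → Term) (S1 S2 : Set Atom) : Prop := substSet σ S1 ⊆ S2

/-- An injective homomorphism (injective on the terms of the source). -/
def isInjHom (σ : ℕ → Term) (S1 S2 : Set Atom) : Prop :=
  isHom σ S1 S2 ∧ Set.InjOn (Term.subst σ) (termsOf S1)

/-- An instance is a finite set of ground atoms. -/
def IsInstance (I : Set Atom) : Prop := I.Finite ∧ ∀ t ∈ termsOf I, t.isConst

/-- An existential rule, given by its body and head. -/
structure Rule where
  body : Set Atom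
  head : Set Atom

def Rule.frontier (R : Rule) : Set ℕ := varsOf R.body ∩ varsOf R.head
def Rule.exist (R : Rule) : Set ℕ := varsOf R.head \ varsOf R.body

/-- Well-formed rule: finite non-empty body and head, no constants. -/
def WfRule (R : Rule) : Prop :=
  R.body.Finite ∧ R.head.Finite ∧ R.body.Nonempty ∧ R.head.Nonempty ∧
  ∀ t ∈ termsOf (R.body ∪ R.head), ¬ t.isConst

def WfList (L : List Rule) : Prop := ∀ R ∈ L, WfRule R

/-- Restriction of a substitution to a set of variables (default value elsewhere). -/
def restrict (f : ℕ → Term) (F : Set ℕ) : ℕ → Term :=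
  fun v => if v ∈ F then f v else Term.const 0

/-- A semi-oblivious naming of nulls for the rules of `L`: the null created for an
existential variable depends only on the rule and the restriction of the trigger to the
frontier, and distinct such data yield distinct nulls. -/
def SONaming (L : List Rule) (ν : Rule → (ℕ → Term) → ℕ → ℕ) : Prop :=
  (∀ R ∈ L, ∀ f g : ℕ → Term,
      restrict f R.frontier = restrict g R.frontier → ν R f = ν R g) ∧
  (∀ R ∈ L, ∀ R' ∈ L, ∀ f f' x x', ν R f x = ν R' f' x' →
      R = R' ∧ restrict f R.frontier = restrict f' R'.frontier ∧ x = x')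

/-- The safe extension of a trigger `π`, replacing each existential variable by its null. -/
def safeSub (ν : Rule → (ℕ → Term) → ℕ → ℕ) (R : Rule) (π : ℕ → Term) : ℕ → Term :=
  fun y => if y ∈ R.exist then Term.var (ν R (restrict π R.frontier) y) else π y

/-- One breadth-first semi-oblivious chase step. -/
def chaseStep (ν : Rule → (ℕ → Term) → ℕ → ℕ) (L : List Rule) (S : Set Atom) : Set Atom :=
  S ∪ {a | ∃ R ∈ L, ∃ π : ℕ → Term, isHom π R.body S ∧ a ∈ substSet (safeSub ν R π) R.head}

/-- The breadth-first semi-oblivious chase. -/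
def chaseF (ν : Rule → (ℕ → Term) → ℕ → ℕ) (L : List Rule) (I : Set Atom) : ℕ → Set Atom
  | 0 => I
  | k + 1 => chaseStep ν L (chaseF ν L I k)

def chaseInf (ν : Rule → (ℕ → Term) → ℕ → ℕ) (L : List Rule) (I : Set Atom) : Set Atom :=
  ⋃ k, chaseF ν L I k

/-- `L'` parallelises `L`. -/
def Parallelises (L' L : List Rule) : Prop :=
  ∀ ν ν', SONaming L ν → SONaming L' ν' → ∀ I, IsInstance I →
    (∃ σ, isInjHom σ (chaseInf ν L I) (chaseF ν' L' I 1)) ∧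
    (∃ σ, isHom σ (chaseF ν' L' I 1) (chaseInf ν L I))

def Parallelisable (L : List Rule) : Prop := ∃ L', WfList L' ∧ Parallelises L' L

/-- Boundedness of the semi-oblivious chase, uniformly over all instances. -/
def Bounded (L : List Rule) : Prop :=
  ∃ k, ∀ ν, SONaming L ν → ∀ I, IsInstance I → chaseF ν L I k = chaseInf ν L I

def ChaseFinite (L : List Rule) : Prop :=
  ∀ ν, SONaming L ν → ∀ I, IsInstance I → ∃ k, chaseF ν L I k = chaseInf ν L I

/-- Two atoms are `T`-linked if they share a term of `T`. -/
def linked (T : Set Term) (a b : Atom) : Prop := ∃ t ∈ T, t ∈ a.terms ∧ t ∈ b.terms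

/-- Connectivity in `S` by a path of atoms where consecutive atoms share a term of `T`. -/
def connectedIn (S : Set Atom) (T : Set Term) (a b : Atom) : Prop :=
  a ∈ S ∧ b ∈ S ∧ Relation.ReflTransGen (fun x y => x ∈ S ∧ y ∈ S ∧ linked T x y) a b

/-- `P` is closed in `S` w.r.t. `T`-linkedness. -/
def closedIn (S : Set Atom) (T : Set Term) (P : Set Atom) : Prop :=
  ∀ a ∈ S, ∀ b ∈ P, linked T a b → a ∈ P

/-- A piece of `S` w.r.t. `T`: a non-empty subset closed under `T`-linkedness and minimal such. -/
def IsPiece (S : Set Atom) (T : Set Term) (P : Set Atom) : Prop :=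
  P.Nonempty ∧ P ⊆ S ∧ closedIn S T P ∧
  ∀ P', P' ⊆ P → P'.Nonempty → closedIn S T P' → P' = P

/-- A single-piece rule: its head is a piece of itself w.r.t. its existential variables. -/
def SinglePiece (R : Rule) : Prop := IsPiece R.head (Term.var '' R.exist) R.head

/-- The rule used at step `k` of a derivation. -/
def ruleAt (L : List Rule) (r : ℕ → ℕ) (k : ℕ) : Rule := L.getD (r k) ⟨∅, ∅⟩

/-- The set of atoms produced by the `k`-th rule application of a derivation. -/
def producedAt (ν : Rule → (ℕ → Term) → ℕ → ℕ) (L : List Rule) (r : ℕ → ℕ)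
    (π : ℕ → ℕ → Term) (k : ℕ) : Set Atom :=
  substSet (safeSub ν (ruleAt L r k) (π k)) (ruleAt L r k).head

def derivState (ν : Rule → (ℕ → Term) → ℕ → ℕ) (L : List Rule) (I : Set Atom)
    (r : ℕ → ℕ) (π : ℕ → ℕ → Term) : ℕ → Set Atom
  | 0 => I
  | k + 1 => derivState ν L I r π k ∪ producedAt ν L r π k

/-- An `R`-derivation of length `n` from `I`: each step applies a trigger. -/
def IsDeriv (ν : Rule → (ℕ → Term) → ℕ → ℕ) (L : List Rule) (I : Set Atom) (n : ℕ)
    (r : ℕ → ℕ) (π : ℕ → ℕ → Term) : Prop :=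
  ∀ k < n, r k < L.length ∧ isHom (π k) (ruleAt L r k).body (derivState ν L I r π k)

/-- A pieceful derivation: each trigger maps its rule's frontier entirely into the terms of
the initial instance, or entirely into the terms produced by a single earlier application. -/
def PiecefulDeriv (ν : Rule → (ℕ → Term) → ℕ → ℕ) (L : List Rule) (I : Set Atom) (n : ℕ)
    (r : ℕ → ℕ) (π : ℕ → ℕ → Term) : Prop :=
  ∀ k < n, (∀ x ∈ (ruleAt L r k).frontier, π k x ∈ termsOf I) ∨
    ∃ j < k, ∀ x ∈ (ruleAt L r k).frontier, π k x ∈ termsOf (producedAt ν L r π j)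

/-- A pieceful rule set: every derivation from every instance is pieceful. -/
def PiecefulSet (L : List Rule) : Prop :=
  ∀ ν, SONaming L ν → ∀ I, IsInstance I → ∀ n r π,
    IsDeriv ν L I n r π → PiecefulDeriv ν L I n r π

/-- First-order structures for the semantics of rules. -/
structure Struct where
  D : Type
  nonempty : Nonempty D
  interp : ℕ → List D → Prop
  cinterp : ℕ → D

def evalT (M : Struct) (v : ℕ → M.D) : Term → M.D
  | .const c => M.cinterp c
  | .var x => v x

def holdsA (M : Struct) (v : ℕ → M.D) (a : Atom) : Prop :=
  M.interp a.pred (a.args.map (evalT M v))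

/-- Satisfaction of (the universal-existential closure of) a rule in a structure. -/
def satRule (M : Struct) (R : Rule) : Prop :=
  ∀ v : ℕ → M.D, (∀ a ∈ R.body, holdsA M v a) →
    ∃ w : ℕ → M.D, (∀ x ∈ varsOf R.body, w x = v x) ∧ ∀ a ∈ R.head, holdsA M w a

/-- Separating variables of `S' ⊆ S`: variables occurring both in `S'` and in `S \ S'`. -/
def sepVars (S' S : Set Atom) : Set ℕ := varsOf S' ∩ varsOf (S \ S')

/-- A piece-unifier `(S', H', u)` of a set of atoms `S` with a rule `R`. -/
def IsPieceUnifier (S : Set Atom) (R : Rule) (S' H' : Set Atom) (u : ℕ → Term) : Prop :=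
  Disjoint (varsOf S) (varsOf (R.body ∪ R.head)) ∧
  S'.Nonempty ∧ S' ⊆ S ∧ H' ⊆ R.head ∧
  (∀ x, x ∉ R.frontier ∪ varsOf S' → u x = Term.var x) ∧
  (∀ x ∈ R.frontier ∪ varsOf S', ∃ y ∈ varsOf R.head, u x = Term.var y) ∧
  (∀ x ∈ R.frontier, ∃ y ∈ R.frontier, u x = Term.var y) ∧
  (∀ x ∈ sepVars S' S, ∃ y ∈ R.frontier, u x = Term.var y) ∧
  substSet u S' = substSet u H'

/-- The existential stability property of a piece-unifier of `body R2` with `R1`. -/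
def StableUnifier (R2 R1 : Rule) (B2' : Set Atom) (u : ℕ → Term) : Prop :=
  (∀ x ∈ R2.frontier, u x ∉ Term.var '' R1.exist) ∨ R2.frontier ⊆ varsOf B2'

/-- The existential composition `R2 ∘_μ R1` w.r.t. a piece-unifier `μ = (B2', H1', u)`
of `body R2` with `R1`. -/
def compose (R2 R1 : Rule) (B2' : Set Atom) (u : ℕ → Term) : Rule :=
  if ∀ x ∈ R2.frontier, u x ∉ Term.var '' R1.exist then
    ⟨substSet u R1.body ∪ substSet u (R2.body \ B2'), substSet u R2.head⟩
  else
    ⟨substSet u R1.body ∪ substSet u (R2.body \ B2'),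
     substSet u R1.head ∪ substSet u R2.head⟩

/-- The closure `R*` of a rule set under existential composition. -/
inductive InClosure (𝒮 : Set Rule) : Rule → Prop
  | base {R : Rule} : R ∈ 𝒮 → InClosure 𝒮 R
  | comp {Ri Rj : Rule} {B' H' : Set Atom} {u : ℕ → Term} :
      InClosure 𝒮 Ri → InClosure 𝒮 Rj →
      IsPieceUnifier Ri.body Rj B' H' u → InClosure 𝒮 (compose Ri Rj B' u)

def ruleSet (L : List Rule) : Set Rule := {R | R ∈ L}

/-- The stability property for a (possibly infinite) rule set. -/
def StableSet (𝒮 : Set Rule) : Prop :=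
  ∀ R1 ∈ 𝒮, ∀ R2 ∈ 𝒮, ∀ B2' H1' u,
    IsPieceUnifier R2.body R1 B2' H1' u → StableUnifier R2 R1 B2' u

/-- `J` is a result of one breadth-first chase step of a (possibly infinite) rule set on `I`,
with fresh pairwise-compatible nulls (semi-oblivious naming). -/
def OneStepResult (𝒮 : Set Rule) (I J : Set Atom) : Prop :=
  ∃ ν : Rule → (ℕ → Term) → ℕ → ℕ,
    (∀ R ∈ 𝒮, ∀ f x, Term.var (ν R f x) ∉ termsOf I) ∧
    (∀ R ∈ 𝒮, ∀ R' ∈ 𝒮, ∀ f f' x x', ν R f x = ν R' f' x' →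
        R = R' ∧ restrict f R.frontier = restrict f' R'.frontier ∧ x = x') ∧
    J = I ∪ {a | ∃ R ∈ 𝒮, ∃ π : ℕ → Term, isHom π R.body I ∧
                  a ∈ substSet (safeSub ν R π) R.head}

/-- `I, R ⊨ q` for a Boolean conjunctive query `q` (a set of atoms). -/
def Entails (L : List Rule) (I q : Set Atom) : Prop :=
  ∀ ν, SONaming L ν → ∃ k σ, isHom σ q (chaseF ν L I k)

/-- The null `t` occurs in at least `n` atoms of `S`. -/
def occursInAtLeast (S : Set Atom) (t : Term) (n : ℕ) : Prop :=
  ∃ F : Set Atom, F ⊆ {a | a ∈ S ∧ t ∈ a.terms} ∧ F.Finite ∧ n ≤ F.ncard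

def FrontierGuarded (R : Rule) : Prop := ∃ a ∈ R.body, R.frontier ⊆ a.vars

def IsDatalog (R : Rule) : Prop := R.exist = ∅ ∧ ∃ a, R.head = {a}

end ER

/-!
Every atom of the chase outside `I` is produced by a trigger, a rule with a frontier match.
Realising the chase up to a trigger as a derivation, piecefulness says that the frontier of
the trigger is matched either into constants or into the output of one trigger fired at an
earlier breadth-first step, its parent. A null is invented by one trigger and passed on only
through frontiers, so outputs sharing a null come from triggers with a common root in the
parent forest, and a whole piece lies in the outputs of the triggers below one root. A trigger
is fixed by its rule and its frontier map into the boundedly many terms of its parent's output,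
so it has at most `childBound L` children, while a chase that is complete after `k` steps caps
the depth of the forest at `k`. Hence a piece has at most
`(childBound L + 1) ^ (k + 1) * maxHeadSize L` atoms.
-/

open Set Function

lemma Set.encard_biUnion_le_mul {ι α : Type*} {t : Set ι} {s : ι → Set α} {b : ℕ∞}
    (h : ∀ i ∈ t, (s i).encard ≤ b) : (⋃ i ∈ t, s i).encard ≤ t.encard * b := by
  rcases t.finite_or_infinite with ht | ht
  · obtain ⟨t, rfl⟩ := ht.exists_finset_coe
    simp only [Finset.mem_coe, encard_coe_eq_coe_finsetCard]
    calc (⋃ i ∈ t, s i).encard ≤ ∑ i ∈ t, (s i).encard := t.set_encard_biUnion_le s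
      _ ≤ t.card • b := Finset.sum_le_card_nsmul _ _ _ h
      _ = t.card * b := nsmul_eq_mul _ _
  · rcases eq_or_ne b 0 with rfl | hb
    · simp_all
    · rw [ht.encard_eq, ENat.top_mul hb]
      exact le_top

lemma Set.encard_setOf_mapsTo_le {α β : Type*} {K : Set α} {V : Set β} (hK : K.Finite)
    (hV : V.Finite) (c : β) :
    {g : α → β | MapsTo g K V ∧ ∀ x ∉ K, g x = c}.encard ≤ (V.ncard ^ K.ncard : ℕ) := by
  have := hK.to_subtype
  have := hV.to_subtype
  let extend : (K → V) → α → β := fun φ x => if h : x ∈ K then φ ⟨x, h⟩ else c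
  have hsub : {g : α → β | MapsTo g K V ∧ ∀ x ∉ K, g x = c} ⊆ range extend := by
    rintro g ⟨hgK, hgc⟩
    refine ⟨fun x => ⟨g x, hgK x.2⟩, funext fun x => ?_⟩
    by_cases hx : x ∈ K <;> simp [extend, hx, hgc]
  calc _ ≤ (range extend).encard := encard_le_encard hsub
    _ ≤ ENat.card (K → V) := by rw [← image_univ, ← encard_univ]; exact encard_image_le _ _
    _ = (V.ncard ^ K.ncard : ℕ) := by
      rw [ENat.card_eq_coe_natCard, Nat.card_fun, Nat.card_coe_set_eq, Nat.card_coe_set_eq]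

namespace ER

lemma mem_termsOf {S : Set Atom} {t : Term} : t ∈ termsOf S ↔ ∃ a ∈ S, t ∈ a.terms := by
  simp [termsOf]

lemma mem_varsOf {S : Set Atom} {v : ℕ} : v ∈ varsOf S ↔ ∃ a ∈ S, v ∈ a.vars := by
  simp [varsOf]

lemma terms_subset_termsOf {a : Atom} {S : Set Atom} (h : a ∈ S) : a.terms ⊆ termsOf S :=
  fun _ ht => mem_termsOf.2 ⟨a, h, ht⟩

lemma termsOf_mono {S S' : Set Atom} (h : S ⊆ S') : termsOf S ⊆ termsOf S' :=
  biUnion_subset_biUnion_left h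

lemma termsOf_finite {S : Set Atom} (h : S.Finite) : (termsOf S).Finite :=
  h.biUnion fun a _ => a.args.finite_toSet

lemma termsOf_substSet (σ : ℕ → Term) (S : Set Atom) :
    termsOf (substSet σ S) = Term.subst σ '' termsOf S := by
  ext t
  simp only [termsOf, substSet, mem_iUnion, mem_image, exists_prop]
  constructor
  · rintro ⟨_, ⟨a, ha, rfl⟩, ht⟩
    obtain ⟨s, hs, rfl⟩ := List.mem_map.1 ht
    exact ⟨s, ⟨a, ha, hs⟩, rfl⟩
  · rintro ⟨s, ⟨a, ha, hs⟩, rfl⟩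
    exact ⟨_, ⟨a, ha, rfl⟩, List.mem_map_of_mem hs⟩

lemma isHom.var_mem {π : ℕ → Term} {S S' : Set Atom} (h : isHom π S S') {x : ℕ}
    (hx : x ∈ varsOf S) : π x ∈ termsOf S' := by
  obtain ⟨a, ha, hxa⟩ := mem_varsOf.1 hx
  exact terms_subset_termsOf (h ⟨a, ha, rfl⟩) (List.mem_map_of_mem (f := Term.subst π) hxa)

lemma Rule.frontier_subset_body (R : Rule) : R.frontier ⊆ varsOf R.body := inter_subset_left

lemma Atom.vars_finite (a : Atom) : a.vars.Finite :=
  a.args.finite_toSet.preimage fun _ _ _ _ => Term.var.inj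

lemma WfRule.frontier_finite {R : Rule} (h : WfRule R) : R.frontier.Finite :=
  (h.1.biUnion fun a _ => a.vars_finite).subset R.frontier_subset_body

lemma restrict_of_mem {f : ℕ → Term} {F : Set ℕ} {x : ℕ} (h : x ∈ F) : restrict f F x = f x :=
  if_pos h

lemma restrict_of_not_mem {f : ℕ → Term} {F : Set ℕ} {x : ℕ} (h : x ∉ F) :
    restrict f F x = Term.const 0 :=
  if_neg h

lemma restrict_restrict (f : ℕ → Term) (F : Set ℕ) : restrict (restrict f F) F = restrict f F := by
  funext x; by_cases h : x ∈ F <;> simp [restrict, h]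

lemma substSet_safeSub_restrict (ν : Rule → (ℕ → Term) → ℕ → ℕ) (R : Rule) (π : ℕ → Term) :
    substSet (safeSub ν R π) R.head = substSet (safeSub ν R (restrict π R.frontier)) R.head := by
  refine image_congr fun a ha => ?_
  simp only [Atom.subst, Atom.mk.injEq, true_and]
  refine List.map_congr_left fun s hs => ?_
  cases s with
  | const c => rfl
  | var y =>
    have hy : y ∈ varsOf R.head := mem_varsOf.2 ⟨a, ha, hs⟩
    by_cases he : y ∈ R.exist
    · simp [Term.subst, safeSub, he, restrict_restrict]
    · have hf : y ∈ R.frontier := ⟨not_not.1 fun hb => he ⟨hy, hb⟩, hy⟩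
      simp [Term.subst, safeSub, he, restrict_of_mem hf]

/-- A rule with the restriction of a body match to its frontier: under a semi-oblivious naming
this is all that determines the atoms produced. -/
abbrev Trigger := Rule × (ℕ → Term)

section Chase

variable (ν : Rule → (ℕ → Term) → ℕ → ℕ) (L : List Rule) (I : Set Atom)

def output (T : Trigger) : Set Atom := substSet (safeSub ν T.1 T.2) T.1.head

def Applicable (m : ℕ) (T : Trigger) : Prop :=
  T.1 ∈ L ∧ ∃ π, isHom π T.1.body (chaseF ν L I m) ∧ T.2 = restrict π T.1.frontier

def Used (T : Trigger) : Prop := ∃ m, Applicable ν L I m T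

def rank (T : Trigger) : ℕ := sInf {m | Applicable ν L I m T}

variable {ν L I}

lemma output_restrict (R : Rule) (π : ℕ → Term) :
    output ν (R, restrict π R.frontier) = substSet (safeSub ν R π) R.head :=
  (substSet_safeSub_restrict ν R π).symm

lemma Used.applicable_rank {T : Trigger} (h : Used ν L I T) : Applicable ν L I (rank ν L I T) T :=
  Nat.sInf_mem h

lemma Applicable.rank_le {T : Trigger} {m : ℕ} (h : Applicable ν L I m T) : rank ν L I T ≤ m :=
  Nat.sInf_le h

lemma Used.rule_mem {T : Trigger} (h : Used ν L I T) : T.1 ∈ L :=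
  h.choose_spec.1

lemma Used.restrict_eq {T : Trigger} (h : Used ν L I T) : restrict T.2 T.1.frontier = T.2 := by
  obtain ⟨_, _, π, _, hT⟩ := h
  rw [hT, restrict_restrict]

lemma chaseF_mono {m m' : ℕ} (h : m ≤ m') : chaseF ν L I m ⊆ chaseF ν L I m' := by
  induction h with
  | refl => exact subset_rfl
  | step _ ih => exact ih.trans subset_union_left

lemma chaseF_subset_chaseInf (m : ℕ) : chaseF ν L I m ⊆ chaseInf ν L I :=
  subset_iUnion (chaseF ν L I) m

lemma mem_chaseF_succ {m : ℕ} {a : Atom} :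
    a ∈ chaseF ν L I (m + 1) ↔ a ∈ chaseF ν L I m ∨ ∃ T, Applicable ν L I m T ∧ a ∈ output ν T := by
  refine or_congr_right ⟨?_, ?_⟩
  · rintro ⟨R, hR, π, hπ, ha⟩
    exact ⟨(R, restrict π R.frontier), ⟨hR, π, hπ, rfl⟩, (output_restrict R π).symm ▸ ha⟩
  · rintro ⟨⟨R, f⟩, ⟨hR, π, hπ, hf⟩, ha⟩
    obtain rfl : f = restrict π R.frontier := hf
    exact ⟨R, hR, π, hπ, output_restrict R π ▸ ha⟩

lemma mem_or_exists_used_of_mem_chaseF {m : ℕ} {a : Atom} (ha : a ∈ chaseF ν L I m) :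
    a ∈ I ∨ ∃ T, Used ν L I T ∧ a ∈ output ν T := by
  induction m with
  | zero => exact Or.inl ha
  | succ m ih =>
    rcases mem_chaseF_succ.1 ha with ha | ⟨T, hT, haT⟩
    · exact ih ha
    · exact Or.inr ⟨T, ⟨m, hT⟩, haT⟩

lemma exists_used_of_null_mem (hI : IsInstance I) {a : Atom} (ha : a ∈ chaseInf ν L I) {t : Term}
    (ht : t ∈ a.terms) (htc : ¬ t.isConst) : ∃ T, Used ν L I T ∧ a ∈ output ν T := by
  obtain ⟨m, ham⟩ := mem_iUnion.1 ha
  exact (mem_or_exists_used_of_mem_chaseF ham).resolve_left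
    fun haI => htc (hI.2 t (terms_subset_termsOf haI ht))

lemma Used.rank_le_of_chaseF_eq {T : Trigger} {k : ℕ} (hk : chaseF ν L I k = chaseInf ν L I)
    (hT : Used ν L I T) : rank ν L I T ≤ k := by
  obtain ⟨m, hR, π, hπ, hTπ⟩ := hT
  exact Applicable.rank_le ⟨hR, π, hk ▸ hπ.trans (chaseF_subset_chaseInf m), hTπ⟩

lemma mem_termsOf_output {T : Trigger} (hwf : WfRule T.1) {t : Term}
    (ht : t ∈ termsOf (output ν T)) :
    (∃ y, t = Term.var (ν T.1 (restrict T.2 T.1.frontier) y)) ∨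
      ∃ x ∈ T.1.frontier, t = T.2 x := by
  rw [output, termsOf_substSet] at ht
  obtain ⟨s, hs, rfl⟩ := ht
  cases s with
  | const c => exact absurd trivial (hwf.2.2.2.2 _ (termsOf_mono subset_union_right hs))
  | var y =>
    obtain ⟨a, ha, hya⟩ := mem_termsOf.1 hs
    have hy : y ∈ varsOf T.1.head := mem_varsOf.2 ⟨a, ha, hya⟩
    by_cases he : y ∈ T.1.exist
    · exact Or.inl ⟨y, by simp [Term.subst, safeSub, he]⟩
    · exact Or.inr ⟨y, ⟨not_not.1 fun hb => he ⟨hy, hb⟩, hy⟩, by simp [Term.subst, safeSub, he]⟩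

end Chase

section Derivations

variable {ν : Rule → (ℕ → Term) → ℕ → ℕ} {L : List Rule} {I : Set Atom}

lemma ruleAt_mem {r : ℕ → ℕ} {j : ℕ} (h : r j < L.length) : ruleAt L r j ∈ L := by
  rw [ruleAt, List.getD_eq_getElem _ _ h]
  exact List.getElem_mem h

lemma exists_getD_eq {R : Rule} (hR : R ∈ L) : ∃ i < L.length, L.getD i ⟨∅, ∅⟩ = R := by
  obtain ⟨i, hi, rfl⟩ := List.mem_iff_getElem.1 hR
  exact ⟨i, hi, List.getD_eq_getElem _ _ hi⟩

variable {r : ℕ → ℕ} {π : ℕ → ℕ → Term} {n i : ℕ} {σ : ℕ → Term}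

lemma ruleAt_update_self : ruleAt L (update r n i) n = L.getD i ⟨∅, ∅⟩ := by
  rw [ruleAt, update_self]

lemma ruleAt_update_of_ne {j : ℕ} (h : j ≠ n) : ruleAt L (update r n i) j = ruleAt L r j := by
  rw [ruleAt, ruleAt, update_of_ne h]

lemma producedAt_update_self :
    producedAt ν L (update r n i) (update π n σ) n =
      substSet (safeSub ν (L.getD i ⟨∅, ∅⟩) σ) (L.getD i ⟨∅, ∅⟩).head := by
  rw [producedAt, ruleAt_update_self, update_self]

lemma producedAt_update_of_ne {j : ℕ} (h : j ≠ n) :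
    producedAt ν L (update r n i) (update π n σ) j = producedAt ν L r π j := by
  rw [producedAt, producedAt, ruleAt_update_of_ne h, update_of_ne h]

lemma derivState_update_of_le {j : ℕ} (h : j ≤ n) :
    derivState ν L I (update r n i) (update π n σ) j = derivState ν L I r π j := by
  induction j with
  | zero => rfl
  | succ j ih =>
    rw [derivState, derivState, ih (by omega), producedAt_update_of_ne (by omega)]

lemma derivState_update_succ :
    derivState ν L I (update r n i) (update π n σ) (n + 1) =
      derivState ν L I r π n ∪ substSet (safeSub ν (L.getD i ⟨∅, ∅⟩) σ) (L.getD i ⟨∅, ∅⟩).head := by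
  rw [derivState, derivState_update_of_le le_rfl, producedAt_update_self]

lemma IsDeriv.snoc (hd : IsDeriv ν L I n r π) (hi : i < L.length)
    (hσ : isHom σ (L.getD i ⟨∅, ∅⟩).body (derivState ν L I r π n)) :
    IsDeriv ν L I (n + 1) (update r n i) (update π n σ) := by
  intro j hj
  rw [derivState_update_of_le (by omega)]
  rcases (Nat.lt_succ_iff_lt_or_eq.1 hj) with hj | rfl
  · rw [ruleAt_update_of_ne hj.ne, update_of_ne hj.ne, update_of_ne hj.ne]
    exact hd j hj
  · rw [ruleAt_update_self, update_self, update_self]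
    exact ⟨hi, hσ⟩

end Derivations

/-- `S` is contained in the result of a derivation from `I` all of whose triggers already apply
to `C`. -/
def Derivable (ν : Rule → (ℕ → Term) → ℕ → ℕ) (L : List Rule) (I C S : Set Atom) : Prop :=
  ∃ n r π, IsDeriv ν L I n r π ∧ S ⊆ derivState ν L I r π n ∧
    ∀ j < n, isHom (π j) (ruleAt L r j).body C

section Derivable

variable {ν : Rule → (ℕ → Term) → ℕ → ℕ} {L : List Rule} {I C S : Set Atom}

lemma derivable_of_subset (h : S ⊆ I) : Derivable ν L I C S :=
  ⟨0, fun _ => 0, fun _ _ => Term.const 0, fun _ h => absurd h (Nat.not_lt_zero _), h,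
    fun _ h => absurd h (Nat.not_lt_zero _)⟩

lemma Derivable.mono {S' : Set Atom} (h : Derivable ν L I C S) (hS : S' ⊆ S) :
    Derivable ν L I C S' :=
  let ⟨n, r, π, hd, hSn, hC⟩ := h
  ⟨n, r, π, hd, hS.trans hSn, hC⟩

lemma Derivable.mono_right {C' : Set Atom} (h : Derivable ν L I C S) (hC : C ⊆ C') :
    Derivable ν L I C' S :=
  let ⟨n, r, π, hd, hSn, hCn⟩ := h
  ⟨n, r, π, hd, hSn, fun j hj => (hCn j hj).trans hC⟩

lemma Derivable.snoc {R : Rule} {σ : ℕ → Term} (h : Derivable ν L I C S) (hR : R ∈ L)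
    (hS : isHom σ R.body S) (hC : isHom σ R.body C) :
    Derivable ν L I C (S ∪ substSet (safeSub ν R σ) R.head) := by
  obtain ⟨n, r, π, hd, hSn, hCn⟩ := h
  obtain ⟨i, hi, rfl⟩ := exists_getD_eq hR
  refine ⟨n + 1, update r n i, update π n σ, hd.snoc hi (hS.trans hSn), ?_, fun j hj => ?_⟩
  · rw [derivState_update_succ]
    exact union_subset_union_left _ hSn
  · rcases (Nat.lt_succ_iff_lt_or_eq.1 hj) with hj | rfl
    · rw [ruleAt_update_of_ne hj.ne, update_of_ne hj.ne]
      exact hCn j hj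
    · rwa [ruleAt_update_self, update_self]

lemma Derivable.pieceful (hp : PiecefulSet L) (hν : SONaming L ν) (hI : IsInstance I)
    {R : Rule} {σ : ℕ → Term} (h : Derivable ν L I C (substSet σ R.body)) (hR : R ∈ L) :
    (∀ x ∈ R.frontier, σ x ∈ termsOf I) ∨ ∃ R' ∈ L, ∃ σ', isHom σ' R'.body C ∧
      ∀ x ∈ R.frontier, σ x ∈ termsOf (substSet (safeSub ν R' σ') R'.head) := by
  obtain ⟨n, r, π, hd, hSn, hCn⟩ := h
  obtain ⟨i, hi, rfl⟩ := exists_getD_eq hR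
  have hpf := hp ν hν I hI _ _ _ (hd.snoc hi hSn) n n.lt_succ_self
  rw [ruleAt_update_self, update_self] at hpf
  refine hpf.imp_right fun ⟨j, hj, hfr⟩ => ⟨ruleAt L r j, ruleAt_mem (hd j hj).1, π j, hCn j hj, ?_⟩
  rwa [producedAt_update_of_ne hj.ne] at hfr

end Derivable

section Realization

variable {ν : Rule → (ℕ → Term) → ℕ → ℕ} {L : List Rule} {I : Set Atom}

lemma derivable_step (hL : WfList L) {m : ℕ}
    (h : ∀ B : Set Atom, B.Finite → B ⊆ chaseF ν L I m → Derivable ν L I (chaseF ν L I m) B)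
    {A : Set Atom} (hA : A.Finite) (hAm : A ⊆ chaseF ν L I (m + 1)) :
    Derivable ν L I (chaseF ν L I m) A := by
  suffices ∀ B : Set Atom, B.Finite → B ⊆ chaseF ν L I m → Derivable ν L I (chaseF ν L I m) (B ∪ A)
    from (this ∅ finite_empty (empty_subset _)).mono subset_union_right
  induction A, hA using Finite.induction_on with
  | empty => exact fun B hB hBm => (h B hB hBm).mono (union_empty B).subset
  | @insert a A _ _ ih =>
    intro B hB hBm
    rcases mem_chaseF_succ.1 (hAm (mem_insert a A)) with ha | ⟨⟨R, f⟩, ⟨hR, σ, hσ, hf⟩, haT⟩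
    · refine (ih ((subset_insert a A).trans hAm) (insert a B) (hB.insert a)
        (insert_subset ha hBm)).mono ?_
      rintro b (hb | rfl | hb)
      · exact Or.inl (Or.inr hb)
      · exact Or.inl (Or.inl rfl)
      · exact Or.inr hb
    · obtain rfl : f = restrict σ R.frontier := hf
      have hP : (substSet σ R.body).Finite := (hL R hR).1.image _
      have hd := (ih ((subset_insert a A).trans hAm) _ (hB.union hP) (union_subset hBm hσ)).snoc
        hR (subset_union_right.trans subset_union_left) hσ
      refine hd.mono ?_
      rw [← output_restrict]
      rintro b (hb | rfl | hb)
      · exact Or.inl (Or.inl (Or.inl hb))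
      · exact Or.inr haT
      · exact Or.inl (Or.inr hb)

lemma derivable_of_subset_chaseF_succ (hL : WfList L) :
    ∀ m : ℕ, ∀ A : Set Atom, A.Finite → A ⊆ chaseF ν L I (m + 1) →
      Derivable ν L I (chaseF ν L I m) A
  | 0, _, hA, hAm => derivable_step hL (fun _ _ hB => derivable_of_subset hB) hA hAm
  | m + 1, _, hA, hAm => derivable_step hL (fun B hB hBm =>
      (derivable_of_subset_chaseF_succ hL m B hB hBm).mono_right (chaseF_mono m.le_succ)) hA hAm

end Realization

section Ancestry

variable (ν : Rule → (ℕ → Term) → ℕ → ℕ) (L : List Rule) (I : Set Atom)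

def HasParent (T : Trigger) : Prop :=
  ∃ p, Used ν L I p ∧ rank ν L I p < rank ν L I T ∧
    ∀ x ∈ T.1.frontier, T.2 x ∈ termsOf (output ν p)

def parent (T : Trigger) : Trigger := if h : HasParent ν L I T then h.choose else T

variable {ν L I}

lemma HasParent.parent_spec {T : Trigger} (h : HasParent ν L I T) :
    Used ν L I (parent ν L I T) ∧ rank ν L I (parent ν L I T) < rank ν L I T ∧
      ∀ x ∈ T.1.frontier, T.2 x ∈ termsOf (output ν (parent ν L I T)) := by
  rw [parent, dif_pos h]
  exact h.choose_spec

variable (ν L I) in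
def root (T : Trigger) : Trigger := if HasParent ν L I T then root (parent ν L I T) else T
termination_by rank ν L I T
decreasing_by exact (HasParent.parent_spec ‹_›).2.1

lemma root_of_hasParent {T : Trigger} (h : HasParent ν L I T) :
    root ν L I T = root ν L I (parent ν L I T) := by
  rw [root, if_pos h]

lemma root_of_not_hasParent {T : Trigger} (h : ¬ HasParent ν L I T) : root ν L I T = T := by
  rw [root, if_neg h]

lemma Used.isConst_or_hasParent (hL : WfList L) (hp : PiecefulSet L) (hν : SONaming L ν)
    (hI : IsInstance I) {T : Trigger} (hT : Used ν L I T) :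
    (∀ x ∈ T.1.frontier, (T.2 x).isConst) ∨ HasParent ν L I T := by
  obtain ⟨hR, σ, hσ, hTσ⟩ := hT.applicable_rank
  have hfr : ∀ x ∈ T.1.frontier, T.2 x = σ x := fun x hx => hTσ ▸ restrict_of_mem hx
  rcases hm : rank ν L I T with _ | m
  · rw [hm] at hσ
    exact Or.inl fun x hx => hfr x hx ▸ hI.2 _ (hσ.var_mem (T.1.frontier_subset_body hx))
  rw [hm] at hσ
  have hd := derivable_of_subset_chaseF_succ hL m _ ((hL _ hR).1.image _) hσ
  rcases hd.pieceful hp hν hI hR with hfrI | ⟨R', hR', σ', hσ', hfrp⟩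
  · exact Or.inl fun x hx => hfr x hx ▸ hI.2 _ (hfrI x hx)
  · have hp' : Applicable ν L I m (R', restrict σ' R'.frontier) := ⟨hR', σ', hσ', rfl⟩
    refine Or.inr ⟨_, ⟨m, hp'⟩, hm ▸ Nat.lt_succ_of_le hp'.rank_le, fun x hx => ?_⟩
    rw [output_restrict, hfr x hx]
    exact hfrp x hx

lemma Used.exists_creator (hL : WfList L) (hp : PiecefulSet L) (hν : SONaming L ν)
    (hI : IsInstance I) {T : Trigger} (hT : Used ν L I T) {t : Term}
    (ht : t ∈ termsOf (output ν T)) (htc : ¬ t.isConst) :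
    ∃ A y, Used ν L I A ∧ root ν L I A = root ν L I T ∧ t = Term.var (ν A.1 A.2 y) := by
  induction hr : rank ν L I T using Nat.strong_induction_on generalizing T with
  | _ n ih =>
  rcases mem_termsOf_output (hL _ hT.rule_mem) ht with ⟨y, rfl⟩ | ⟨x, hx, rfl⟩
  · exact ⟨T, y, hT, rfl, by rw [hT.restrict_eq]⟩
  rcases hT.isConst_or_hasParent hL hp hν hI with hc | hpar
  · exact absurd (hc x hx) htc
  obtain ⟨hpu, hpr, hpfr⟩ := hpar.parent_spec
  obtain ⟨A, y, hA, hAr, hAt⟩ := ih _ (hr ▸ hpr) hpu (hpfr x hx) rfl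
  exact ⟨A, y, hA, hAr.trans (root_of_hasParent hpar).symm, hAt⟩

lemma root_eq_of_null_mem_output (hL : WfList L) (hp : PiecefulSet L) (hν : SONaming L ν)
    (hI : IsInstance I) {T T' : Trigger} (hT : Used ν L I T) (hT' : Used ν L I T') {t : Term}
    (htc : ¬ t.isConst) (ht : t ∈ termsOf (output ν T)) (ht' : t ∈ termsOf (output ν T')) :
    root ν L I T = root ν L I T' := by
  obtain ⟨A, y, hA, hAr, rfl⟩ := hT.exists_creator hL hp hν hI ht htc
  obtain ⟨A', y', hA', hAr', hAA'⟩ := hT'.exists_creator hL hp hν hI ht' htc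
  obtain ⟨h1, h2, -⟩ := hν.2 _ hA.rule_mem _ hA'.rule_mem _ _ _ _ (Term.var.inj hAA')
  have : A = A' := Prod.ext h1 (by rw [← hA.restrict_eq, ← hA'.restrict_eq, h2])
  rw [← hAr, ← hAr', this]

end Ancestry

section Counting

variable (ν : Rule → (ℕ → Term) → ℕ → ℕ) (L : List Rule) (I : Set Atom)

def children (p : Trigger) : Set Trigger :=
  {T | Used ν L I T ∧ HasParent ν L I T ∧ parent ν L I T = p}

def family (w : Trigger) (i : ℕ) : Set Trigger :=
  {T | Used ν L I T ∧ root ν L I T = w ∧ rank ν L I T ≤ i}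

def maxHeadSize : ℕ := L.toFinset.sup fun R => R.head.ncard

def maxHeadTerms : ℕ := L.toFinset.sup fun R => (termsOf R.head).ncard

def childBound : ℕ := ∑ R ∈ L.toFinset, maxHeadTerms L ^ R.frontier.ncard

variable {ν L I}

lemma le_maxHeadSize {R : Rule} (hR : R ∈ L) : R.head.ncard ≤ maxHeadSize L :=
  Finset.le_sup (f := fun R : Rule => R.head.ncard) (List.mem_toFinset.2 hR)

lemma le_maxHeadTerms {R : Rule} (hR : R ∈ L) : (termsOf R.head).ncard ≤ maxHeadTerms L :=
  Finset.le_sup (f := fun R : Rule => (termsOf R.head).ncard) (List.mem_toFinset.2 hR)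

lemma encard_output_le {T : Trigger} (hL : WfList L) (hT : T.1 ∈ L) :
    (output ν T).encard ≤ maxHeadSize L :=
  calc (output ν T).encard ≤ T.1.head.encard := encard_image_le _ _
    _ = T.1.head.ncard := ((hL _ hT).2.1.cast_ncard_eq).symm
    _ ≤ maxHeadSize L := by exact_mod_cast le_maxHeadSize hT

lemma termsOf_output_finite {T : Trigger} (hL : WfList L) (hT : T.1 ∈ L) :
    (termsOf (output ν T)).Finite := by
  rw [output, termsOf_substSet]
  exact (termsOf_finite (hL _ hT).2.1).image _

lemma ncard_termsOf_output_le {T : Trigger} (hL : WfList L) (hT : T.1 ∈ L) :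
    (termsOf (output ν T)).ncard ≤ maxHeadTerms L := by
  rw [output, termsOf_substSet]
  exact (ncard_image_le (termsOf_finite (hL _ hT).2.1)).trans (le_maxHeadTerms hT)

lemma encard_children_le (hL : WfList L) {p : Trigger} (hp : p.1 ∈ L) :
    (children ν L I p).encard ≤ childBound L := by
  set V := termsOf (output ν p)
  have hsub : children ν L I p ⊆ ⋃ R ∈ L.toFinset,
      Prod.mk R '' {g | MapsTo g R.frontier V ∧ ∀ x ∉ R.frontier, g x = Term.const 0} := by
    rintro ⟨R, g⟩ ⟨hT, hpar, rfl⟩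
    refine mem_biUnion (List.mem_toFinset.2 hT.rule_mem) ⟨g, ⟨hpar.parent_spec.2.2, ?_⟩, rfl⟩
    intro x hx
    exact (congrFun hT.restrict_eq x).symm.trans (restrict_of_not_mem hx)
  calc (children ν L I p).encard ≤ _ := encard_le_encard hsub
    _ ≤ ∑ R ∈ L.toFinset, _ := L.toFinset.set_encard_biUnion_le _
    _ ≤ ∑ R ∈ L.toFinset, ((maxHeadTerms L ^ R.frontier.ncard : ℕ) : ℕ∞) := by
      refine Finset.sum_le_sum fun R hR => ?_
      have hfr := (hL R (List.mem_toFinset.1 hR)).frontier_finite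
      calc _ ≤ _ := encard_image_le _ _
        _ ≤ _ := encard_setOf_mapsTo_le hfr (termsOf_output_finite hL hp) _
        _ ≤ _ := by gcongr; exact ncard_termsOf_output_le hL hp
    _ = childBound L := by simp [childBound]

lemma family_zero_subset (w : Trigger) : family ν L I w 0 ⊆ {w} := by
  rintro T ⟨-, rfl, hT0⟩
  exact (root_of_not_hasParent fun ⟨_, _, hp, _⟩ => by omega).symm

lemma family_succ_subset (w : Trigger) (i : ℕ) :
    family ν L I w (i + 1) ⊆ insert w (⋃ p ∈ family ν L I w i, children ν L I p) := by
  rintro T ⟨hT, rfl, hTi⟩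
  by_cases hpar : HasParent ν L I T
  · obtain ⟨hpu, hpr, -⟩ := hpar.parent_spec
    exact Or.inr (mem_biUnion ⟨hpu, (root_of_hasParent hpar).symm, by omega⟩ ⟨hT, hpar, rfl⟩)
  · exact Or.inl (root_of_not_hasParent hpar).symm

lemma encard_family_le (hL : WfList L) (w : Trigger) (i : ℕ) :
    (family ν L I w i).encard ≤ ((childBound L + 1) ^ (i + 1) : ℕ) := by
  set β := childBound L
  induction i with
  | zero =>
    refine (encard_le_encard (family_zero_subset w)).trans ?_
    rw [encard_singleton]
    exact_mod_cast Nat.one_le_pow _ _ β.succ_pos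
  | succ i ih =>
    have hβ : 1 + (β + 1) ^ (i + 1) * β ≤ (β + 1) ^ (i + 1 + 1) := by
      rw [pow_succ _ (i + 1), mul_add_one, add_comm]
      exact Nat.add_le_add_left (Nat.one_le_pow _ _ β.succ_pos) _
    calc (family ν L I w (i + 1)).encard
        ≤ (⋃ p ∈ family ν L I w i, children ν L I p).encard + 1 :=
          (encard_le_encard (family_succ_subset w i)).trans (encard_insert_le _ _)
      _ ≤ (family ν L I w i).encard * β + 1 := by
          gcongr
          exact encard_biUnion_le_mul fun p hp => encard_children_le hL hp.1.rule_mem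
      _ ≤ ((β + 1) ^ (i + 1) : ℕ) * β + 1 := by gcongr
      _ ≤ ((β + 1) ^ (i + 1 + 1) : ℕ) := by rw [add_comm]; exact_mod_cast hβ

end Counting

section Pieces

variable {S : Set Atom} {N : Set Term} {Q : Set Atom}

lemma IsPiece.eq_singleton (hQ : IsPiece S N Q) {a : Atom} (ha : a ∈ Q)
    (haN : ∀ t ∈ a.terms, t ∉ N) : Q = {a} := by
  refine (hQ.2.2.2 {a} (singleton_subset_iff.2 ha) (singleton_nonempty a) ?_).symm
  rintro b - c rfl ⟨t, htN, -, htc⟩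
  exact absurd htN (haN t htc)

lemma IsPiece.forall_of_linked (hQ : IsPiece S N Q) {P : Atom → Prop} {a : Atom} (ha : a ∈ Q)
    (hPa : P a) (hP : ∀ b ∈ S, ∀ c ∈ Q, linked N b c → P c → P b) : ∀ b ∈ Q, P b := by
  have hQP : {b ∈ Q | P b} = Q := hQ.2.2.2 _ (sep_subset _ _) ⟨a, ha, hPa⟩
    fun b hb c hc hbc => ⟨hQ.2.2.1 b hb c hc.1 hbc, hP b hb c hc.1 hbc hc.2⟩
  exact fun b hb => (hQP.symm ▸ hb : b ∈ {b ∈ Q | P b}).2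

end Pieces

section PieceBound

variable {ν : Rule → (ℕ → Term) → ℕ → ℕ} {L : List Rule} {I : Set Atom}

lemma root_eq_on_piece (hL : WfList L) (hp : PiecefulSet L) (hν : SONaming L ν)
    (hI : IsInstance I) {Q : Set Atom} (hQ : IsPiece (chaseInf ν L I) (nullsOf (chaseInf ν L I)) Q)
    {a₀ : Atom} {t₀ : Term} {T₀ : Trigger} (ha₀ : a₀ ∈ Q) (ht₀ : t₀ ∈ a₀.terms)
    (ht₀c : ¬ t₀.isConst) (hT₀ : Used ν L I T₀) (ha₀T₀ : a₀ ∈ output ν T₀) :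
    ∀ a ∈ Q, ∀ T, Used ν L I T → a ∈ output ν T → root ν L I T = root ν L I T₀ := by
  refine hQ.forall_of_linked ha₀ (fun T hT ha₀T => ?_) ?_
  · exact root_eq_of_null_mem_output hL hp hν hI hT hT₀ ht₀c
      (terms_subset_termsOf ha₀T ht₀) (terms_subset_termsOf ha₀T₀ ht₀)
  · rintro b - c hc ⟨t, htN, htb, htc⟩ hPc T hT hbT
    obtain ⟨Tc, hTc, hcTc⟩ := exists_used_of_null_mem hI (hQ.2.1 hc) htc htN.2
    exact (root_eq_of_null_mem_output hL hp hν hI hT hTc htN.2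
      (terms_subset_termsOf hbT htb) (terms_subset_termsOf hcTc htc)).trans (hPc Tc hTc hcTc)

lemma encard_piece_le (hL : WfList L) (hp : PiecefulSet L) (hν : SONaming L ν)
    (hI : IsInstance I) {k : ℕ} (hk : chaseF ν L I k = chaseInf ν L I) {Q : Set Atom}
    (hQ : IsPiece (chaseInf ν L I) (nullsOf (chaseInf ν L I)) Q) :
    Q.encard ≤ (max 1 ((childBound L + 1) ^ (k + 1) * maxHeadSize L) : ℕ) := by
  by_cases hground : ∃ a ∈ Q, ∀ t ∈ a.terms, t.isConst
  · obtain ⟨a, ha, hac⟩ := hground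
    rw [hQ.eq_singleton ha fun t ht htN => htN.2 (hac t ht), encard_singleton]
    exact_mod_cast le_max_left _ _
  push Not at hground
  obtain ⟨a₀, ha₀⟩ := hQ.1
  obtain ⟨t₀, ht₀, ht₀c⟩ := hground a₀ ha₀
  obtain ⟨T₀, hT₀, ha₀T₀⟩ := exists_used_of_null_mem hI (hQ.2.1 ha₀) ht₀ ht₀c
  have hroot := root_eq_on_piece hL hp hν hI hQ ha₀ ht₀ ht₀c hT₀ ha₀T₀
  have hsub : Q ⊆ ⋃ T ∈ family ν L I (root ν L I T₀) k, output ν T := by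
    intro a ha
    obtain ⟨t, ht, htc⟩ := hground a ha
    obtain ⟨T, hT, haT⟩ := exists_used_of_null_mem hI (hQ.2.1 ha) ht htc
    exact mem_biUnion ⟨hT, hroot a ha T hT haT, hT.rank_le_of_chaseF_eq hk⟩ haT
  calc Q.encard ≤ _ := encard_le_encard hsub
    _ ≤ (family ν L I (root ν L I T₀) k).encard * maxHeadSize L :=
        encard_biUnion_le_mul fun T hT => encard_output_le hL hT.1.rule_mem
    _ ≤ ((childBound L + 1) ^ (k + 1) : ℕ) * maxHeadSize L := by
        gcongr
        exact encard_family_le hL _ k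
    _ ≤ _ := by exact_mod_cast le_max_right _ _

end PieceBound

/-- if a rule set is pieceful and bounded, the size of every piece of the
chase is bounded by a constant depending only on the rule set. -/
theorem pieceful_bounded_piece_bound (L : List Rule) (hL : WfList L)
    (hp : PiecefulSet L) (hb : Bounded L) :
    ∃ c : ℕ, ∀ ν, SONaming L ν → ∀ I, IsInstance I → ∀ Q,
      IsPiece (chaseInf ν L I) (nullsOf (chaseInf ν L I)) Q → Q.ncard ≤ c := by
  obtain ⟨k, hk⟩ := hb
  refine ⟨max 1 ((childBound L + 1) ^ (k + 1) * maxHeadSize L), fun ν hν I hI Q hQ => ?_⟩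
  exact (encard_le_coe_iff_finite_ncard_le.1 (encard_piece_le hL hp hν hI (hk ν hν I hI) hQ)).2

end ER
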